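/- arXiv:2202.02293 — 2 statements merged into one kernel-verified Lean document; each statement's English description precedes it below -/
import Mathlib

section
/- Let a > 0 and C > 0 be fixed, and let h > 0. If a₁ ≥ a, a₂ ≥ a, a₃ ≥ a are real numbers with |a₁−a₂| ≤ Ch and |a₁−a₃| ≤ Ch, then |M₃(a₁,a₂,a₃) − H₃(a₁,a₂,a₃)| ≤ (2C²/a)·h², i.e. the harmonic mean is within O(h²) of the arithmetic mean. -/
/-- Harmonic mean of three reals. -/
noncomputable def H3 (a₁ a₂ a₃ : ℝ) : ℝ :=
  3 * a₁ * a₂ * a₃ / (a₂ * a₃ + a₁ * a₃ + a₁ * a₂)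

/-- Arithmetic mean of three reals. -/
noncomputable def M3 (a₁ a₂ a₃ : ℝ) : ℝ := (a₁ + a₂ + a₃) / 3

/-- The harmonic mean is within `O(h²)` of the arithmetic mean for values bounded
away from zero whose pairwise differences are `O(h)`. -/
theorem arith_sub_harmonic_bound (a C h : ℝ) (ha : 0 < a) (hC : 0 < C) (hh : 0 < h)
    (a₁ a₂ a₃ : ℝ) (h₁ : a ≤ a₁) (h₂ : a ≤ a₂) (h₃ : a ≤ a₃)
    (h₁₂ : |a₁ - a₂| ≤ C * h) (h₁₃ : |a₁ - a₃| ≤ C * h) :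
    |M3 a₁ a₂ a₃ - H3 a₁ a₂ a₃| ≤ 2 * C ^ 2 / a * h ^ 2 := by
  have ha1 : 0 < a₁ := lt_of_lt_of_le ha h₁
  have ha2 : 0 < a₂ := lt_of_lt_of_le ha h₂
  have ha3 : 0 < a₃ := lt_of_lt_of_le ha h₃
  have hS : 0 < a₂ * a₃ + a₁ * a₃ + a₁ * a₂ := by positivity
  have key : M3 a₁ a₂ a₃ - H3 a₁ a₂ a₃ =
      (a₁ * (a₂ - a₃) ^ 2 + a₂ * (a₁ - a₃) ^ 2 + a₃ * (a₁ - a₂) ^ 2) /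
        (3 * (a₂ * a₃ + a₁ * a₃ + a₁ * a₂)) := by
    unfold M3 H3
    field_simp
    ring
  rw [key, abs_of_nonneg (by positivity)]
  have hrw : 2 * C ^ 2 / a * h ^ 2 = 2 * C ^ 2 * h ^ 2 / a := by ring
  rw [hrw, div_le_div_iff₀ (by positivity) ha]
  obtain ⟨hb1, hb2⟩ := abs_le.mp h₁₂
  obtain ⟨hc1, hc2⟩ := abs_le.mp h₁₃
  have hK : (0:ℝ) ≤ (C * h) ^ 2 := by positivity
  have e12 : (a₁ - a₂) ^ 2 ≤ (C * h) ^ 2 := sq_le_sq' hb1 hb2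
  have e13 : (a₁ - a₃) ^ 2 ≤ (C * h) ^ 2 := sq_le_sq' hc1 hc2
  have e23 : (a₂ - a₃) ^ 2 ≤ 4 * (C * h) ^ 2 := by
    have := sq_le_sq' (a := a₂ - a₃) (b := 2 * (C * h)) (by linarith) (by linarith)
    nlinarith
  nlinarith [mul_le_mul_of_nonneg_left e23 ha1.le,
    mul_le_mul_of_nonneg_left e13 ha2.le,
    mul_le_mul_of_nonneg_left e12 ha3.le,
    mul_le_mul_of_nonneg_left h₂ ha1.le,
    mul_le_mul_of_nonneg_left h₃ ha1.le,
    mul_le_mul_of_nonneg_left h₃ ha2.le,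
    mul_le_mul_of_nonneg_left h₂ ha3.le,
    mul_le_mul_of_nonneg_right e23 ha.le,
    mul_le_mul_of_nonneg_right e13 ha.le,
    mul_le_mul_of_nonneg_right e12 ha.le,
    mul_pos ha1 ha2, mul_pos ha1 ha3, mul_pos ha2 ha3]
end

section
/- Let a > 0, C > 0, h > 0, and let a₁, a₂, a₃, T be real numbers with a₁+T ≥ a, a₂+T ≥ a, a₃+T ≥ a, and with |a₁−a₂| ≤ Ch and |a₁−a₃| ≤ Ch. Then the arithmetic mean M₃(a₁,a₂,a₃) = (a₁+a₂+a₃)/3 and the translated harmonic mean J = H₃(a₁+T, a₂+T, a₃+T) − T satisfy |M₃(a₁,a₂,a₃) − J| ≤ (2C²/a)·h². -/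
/-!
Translating by `T` changes the arithmetic mean by exactly `T`, so the quantity to bound is the
gap `M₃(b) - H₃(b)` at `bᵢ = aᵢ + T ≥ a`. Clearing denominators, this gap is
`Σ b_k (b_i - b_j)² / (3 σ₂(b))`, summed over the three choices of `k` with `{i, j}` the other
two indices. Since `σ₂(b) > b_k (b_i + b_j) ≥ 2 a b_k`, each summand is at most
`(b_i - b_j)² / (6a)`, and the three squared differences add up to at most `6 (C h)²` because
`|a₂ - a₃| ≤ 2 C h`.
-/

theorem M3_add_const (a₁ a₂ a₃ T : ℝ) : M3 (a₁ + T) (a₂ + T) (a₃ + T) = M3 a₁ a₂ a₃ + T := by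
  unfold M3
  ring

theorem M3_sub_H3_eq {b₁ b₂ b₃ : ℝ} (hσ : b₂ * b₃ + b₁ * b₃ + b₁ * b₂ ≠ 0) :
    M3 b₁ b₂ b₃ - H3 b₁ b₂ b₃ =
      b₃ * (b₁ - b₂) ^ 2 / (3 * (b₂ * b₃ + b₁ * b₃ + b₁ * b₂)) +
        b₂ * (b₁ - b₃) ^ 2 / (3 * (b₂ * b₃ + b₁ * b₃ + b₁ * b₂)) +
          b₁ * (b₂ - b₃) ^ 2 / (3 * (b₂ * b₃ + b₁ * b₃ + b₁ * b₂)) := by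
  rw [← add_div, ← add_div, eq_div_iff (mul_ne_zero three_ne_zero hσ)]
  have hH : H3 b₁ b₂ b₃ * (b₂ * b₃ + b₁ * b₃ + b₁ * b₂) = 3 * b₁ * b₂ * b₃ :=
    div_mul_cancel₀ _ hσ
  unfold M3
  linear_combination (-3) * hH

theorem mul_div_three_mul_le_div_six_mul {a s z σ : ℝ} (ha : 0 < a) (hs : 0 ≤ s) (hz : 0 ≤ z)
    (hσ : 2 * a * z < σ) : z * s / (3 * σ) ≤ s / (6 * a) := by
  rw [div_le_div_iff₀ (by nlinarith) (by positivity)]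
  nlinarith [mul_le_mul_of_nonneg_left hσ.le hs]

theorem abs_M3_sub_H3_le {a b₁ b₂ b₃ : ℝ} (ha : 0 < a) (h₁ : a ≤ b₁) (h₂ : a ≤ b₂)
    (h₃ : a ≤ b₃) :
    |M3 b₁ b₂ b₃ - H3 b₁ b₂ b₃| ≤ ((b₁ - b₂) ^ 2 + (b₁ - b₃) ^ 2 + (b₂ - b₃) ^ 2) / (6 * a) := by
  have hb₁ : 0 < b₁ := ha.trans_le h₁
  have hb₂ : 0 < b₂ := ha.trans_le h₂
  have hb₃ : 0 < b₃ := ha.trans_le h₃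
  rw [M3_sub_H3_eq (by positivity), abs_of_nonneg (by positivity), add_div, add_div]
  refine add_le_add (add_le_add ?_ ?_) ?_ <;>
    refine mul_div_three_mul_le_div_six_mul ha (sq_nonneg _) (by positivity) ?_ <;>
    nlinarith [mul_pos hb₁ hb₂, mul_pos hb₁ hb₃, mul_pos hb₂ hb₃]

theorem sq_sub_add_sq_sub_add_sq_sub_le {x₁ x₂ x₃ δ : ℝ} (h₁₂ : |x₁ - x₂| ≤ δ)
    (h₁₃ : |x₁ - x₃| ≤ δ) : (x₁ - x₂) ^ 2 + (x₁ - x₃) ^ 2 + (x₂ - x₃) ^ 2 ≤ 6 * δ ^ 2 := by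
  have e₁₂ : (x₁ - x₂) ^ 2 ≤ δ ^ 2 := sq_le_sq' (abs_le.mp h₁₂).1 (abs_le.mp h₁₂).2
  have e₁₃ : (x₁ - x₃) ^ 2 ≤ δ ^ 2 := sq_le_sq' (abs_le.mp h₁₃).1 (abs_le.mp h₁₃).2
  nlinarith [sq_nonneg (x₁ - x₂ - (x₁ - x₃) + (x₂ - x₃)), sq_nonneg (2 * x₁ - x₂ - x₃)]

theorem translated_harmonic_close_to_arith_general (a C h : ℝ) (ha : 0 < a)
    (a₁ a₂ a₃ T : ℝ) (h₁ : a ≤ a₁ + T) (h₂ : a ≤ a₂ + T) (h₃ : a ≤ a₃ + T)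
    (h₁₂ : |a₁ - a₂| ≤ C * h) (h₁₃ : |a₁ - a₃| ≤ C * h) :
    |M3 a₁ a₂ a₃ - (H3 (a₁ + T) (a₂ + T) (a₃ + T) - T)| ≤ 2 * C ^ 2 / a * h ^ 2 := by
  calc |M3 a₁ a₂ a₃ - (H3 (a₁ + T) (a₂ + T) (a₃ + T) - T)|
      = |M3 (a₁ + T) (a₂ + T) (a₃ + T) - H3 (a₁ + T) (a₂ + T) (a₃ + T)| := by
        rw [M3_add_const]; ring_nf
    _ ≤ ((a₁ + T - (a₂ + T)) ^ 2 + (a₁ + T - (a₃ + T)) ^ 2 + (a₂ + T - (a₃ + T)) ^ 2)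
          / (6 * a) := abs_M3_sub_H3_le ha h₁ h₂ h₃
    _ = ((a₁ - a₂) ^ 2 + (a₁ - a₃) ^ 2 + (a₂ - a₃) ^ 2) / (6 * a) := by ring_nf
    _ ≤ 6 * (C * h) ^ 2 / (6 * a) := by gcongr; exact sq_sub_add_sq_sub_add_sq_sub_le h₁₂ h₁₃
    _ ≤ 2 * C ^ 2 / a * h ^ 2 := by
        rw [div_mul_eq_mul_div, div_le_div_iff₀ (by positivity) ha]
        nlinarith [sq_nonneg (C * h)]

/-- The translated harmonic mean `J = H₃(a₁+T,a₂+T,a₃+T) − T` is within `O(h²)` of the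
arithmetic mean `M₃(a₁,a₂,a₃)` when the translated values are bounded away from zero and
the pairwise differences are `O(h)`. -/
theorem translated_harmonic_close_to_arith (a C h : ℝ) (ha : 0 < a) (hC : 0 < C) (hh : 0 < h)
    (a₁ a₂ a₃ T : ℝ) (h₁ : a ≤ a₁ + T) (h₂ : a ≤ a₂ + T) (h₃ : a ≤ a₃ + T)
    (h₁₂ : |a₁ - a₂| ≤ C * h) (h₁₃ : |a₁ - a₃| ≤ C * h) :
    |M3 a₁ a₂ a₃ - (H3 (a₁ + T) (a₂ + T) (a₃ + T) - T)| ≤ 2 * C ^ 2 / a * h ^ 2 :=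
  translated_harmonic_close_to_arith_general a C h ha a₁ a₂ a₃ T h₁ h₂ h₃ h₁₂ h₁₃
end
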